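/- arXiv:2101.04352 — 4 statements merged into one kernel-verified Lean document; each statement's English description precedes it below -/
import Mathlib

section
/- For every integer p ≥ 3, the equation p(1−q)·log(1−q) + p·q − (p−1)·q² = 0 has exactly one solution q in the open interval (0,1). -/
/-!
Dividing by `q²`, the equation says `w q = (p - 1) / p` for
`w q = ((1 - q) log (1 - q) + q) / q²`. The derivative of `w` is
`((q - 2) log (1 - q) - 2 q) / q³`, whose numerator vanishes at `0` and has derivative
`log (1 - q) + (1 - q)⁻¹ - 1 > 0`; so `w` is strictly increasing on `(0, 1)` and there is
at most one root. A root exists by the intermediate value theorem on `[1/2, 1]`: the left side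
is `1` at `q = 1` and, since `p (2 log 2 - 1) > 1` for `p ≥ 3`, negative at `q = 1/2`.
-/

open Real Set

lemma log_add_inv_sub_one_pos {x : ℝ} (hx : 0 < x) (hx1 : x ≠ 1) : 0 < log x + x⁻¹ - 1 := by
  have := log_lt_sub_one_of_pos (inv_pos.2 hx) (inv_ne_one.2 hx1)
  rw [log_inv] at this
  linarith

lemma hasDerivAt_log_one_sub {x : ℝ} (hx : x < 1) :
    HasDerivAt (fun y => log (1 - y)) (-(1 - x)⁻¹) x := by
  simpa [div_eq_inv_mul] using ((hasDerivAt_id' x).const_sub 1).log (sub_ne_zero.2 hx.ne')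

lemma hasDerivAt_one_sub_mul_log_one_sub_add_self {x : ℝ} (hx : x < 1) :
    HasDerivAt (fun y => (1 - y) * log (1 - y) + y) (-log (1 - x)) x := by
  refine (((hasDerivAt_mul_log (sub_ne_zero.2 hx.ne')).comp x
    ((hasDerivAt_id' x).const_sub 1)).add (hasDerivAt_id' x)).congr_deriv ?_
  ring

lemma continuous_one_sub_mul_log_one_sub : Continuous fun q : ℝ => (1 - q) * log (1 - q) :=
  continuous_mul_log.comp (continuous_const.sub continuous_id)

lemma sub_two_mul_log_one_sub_sub_two_mul_pos {q : ℝ} (hq : q ∈ Ioo (0 : ℝ) 1) :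
    0 < (q - 2) * log (1 - q) - 2 * q := by
  have hderiv : ∀ x < 1, HasDerivAt (fun y => (y - 2) * log (1 - y) - 2 * y)
      (log (1 - x) + (1 - x)⁻¹ - 1) x := by
    intro x hx
    refine ((((hasDerivAt_id' x).sub_const 2).mul (hasDerivAt_log_one_sub hx)).sub
      ((hasDerivAt_id' x).const_mul 2)).congr_deriv ?_
    have : 1 - x ≠ 0 := sub_ne_zero.2 hx.ne'
    field_simp
    ring
  have hmono : StrictMonoOn (fun y => (y - 2) * log (1 - y) - 2 * y) (Ico 0 1) := by
    refine strictMonoOn_of_hasDerivWithinAt_pos (convex_Ico 0 1)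
      (f' := fun x => log (1 - x) + (1 - x)⁻¹ - 1)
      (fun x hx => (hderiv x hx.2).continuousAt.continuousWithinAt)
      (fun x hx => ?_) (fun x hx => ?_) <;> rw [interior_Ico] at hx
    · exact (hderiv x hx.2).hasDerivWithinAt
    · exact log_add_inv_sub_one_pos (sub_pos.2 hx.2) (sub_eq_self.not.2 hx.1.ne')
  simpa using hmono (left_mem_Ico.2 one_pos) (Ioo_subset_Ico_self hq) hq.1

lemma strictMonoOn_one_sub_mul_log_one_sub_add_self_div_sq :
    StrictMonoOn (fun q : ℝ => ((1 - q) * log (1 - q) + q) / q ^ 2) (Ioo 0 1) := by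
  have hderiv : ∀ x ∈ Ioo (0 : ℝ) 1,
      HasDerivAt (fun q : ℝ => ((1 - q) * log (1 - q) + q) / q ^ 2)
        (((x - 2) * log (1 - x) - 2 * x) / x ^ 3) x := by
    rintro x ⟨hx0, hx1⟩
    refine ((hasDerivAt_one_sub_mul_log_one_sub_add_self hx1).div (hasDerivAt_pow 2 x)
      (by positivity)).congr_deriv ?_
    field_simp
    ring
  refine strictMonoOn_of_hasDerivWithinAt_pos (convex_Ioo 0 1)
    (f' := fun x => ((x - 2) * log (1 - x) - 2 * x) / x ^ 3)
    (fun x hx => (hderiv x hx).continuousAt.continuousWithinAt)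
    (fun x hx => ?_) (fun x hx => ?_) <;> rw [interior_Ioo] at hx
  · exact (hderiv x hx).hasDerivWithinAt
  · exact div_pos (sub_two_mul_log_one_sub_sub_two_mul_pos hx) (pow_pos hx.1 3)

/-- For every integer `p ≥ 3`, the equation
`p(1−q)·log(1−q) + p·q − (p−1)·q² = 0` has exactly one solution `q ∈ (0,1)`. -/
theorem stmt0 (p : ℕ) (hp : 3 ≤ p) :
    ∃! q : ℝ, q ∈ Set.Ioo (0:ℝ) 1 ∧
      (p : ℝ) * (1 - q) * Real.log (1 - q) + (p : ℝ) * q - ((p : ℝ) - 1) * q ^ 2 = 0 := by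
  have hp3 : (3 : ℝ) ≤ p := by exact_mod_cast hp
  set f : ℝ → ℝ := fun q => p * ((1 - q) * log (1 - q) + q) - (p - 1) * q ^ 2 with hf
  have hf_eq : ∀ q : ℝ, (p : ℝ) * (1 - q) * log (1 - q) + p * q - (p - 1) * q ^ 2 = f q :=
    fun q => by simp only [hf]; ring
  simp only [hf_eq]
  have hcont : Continuous f := by
    have := continuous_one_sub_mul_log_one_sub
    fun_prop
  have hhalf : f (1 / 2) < 0 := by
    have hlog : log (1 - 1 / 2 : ℝ) = -log 2 := by norm_num [← log_inv]
    simp only [hf, hlog]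
    nlinarith [log_two_gt_d9]
  have hone : f 1 = 1 := by norm_num [hf]
  obtain ⟨c, hc, hfc⟩ := intermediate_value_Ioo (by norm_num : (1 / 2 : ℝ) ≤ 1)
    hcont.continuousOn (show (0 : ℝ) ∈ Ioo (f (1 / 2)) (f 1) from ⟨hhalf, hone.symm ▸ one_pos⟩)
  have hc' : c ∈ Ioo (0 : ℝ) 1 := ⟨by linarith [hc.1], hc.2⟩
  have hroot : ∀ q ∈ Ioo (0 : ℝ) 1, f q = 0 →
      ((1 - q) * log (1 - q) + q) / q ^ 2 = (p - 1) / p := by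
    intro q hq hfq
    rw [div_eq_div_iff (pow_pos hq.1 2).ne' (by positivity)]
    linarith
  refine ⟨c, ⟨hc', hfc⟩, fun q ⟨hq, hfq⟩ => ?_⟩
  exact strictMonoOn_one_sub_mul_log_one_sub_add_self_div_sq.injOn hq hc'
    ((hroot q hq hfq).trans (hroot c hc' hfc).symm)
end

section
/- Let p be an integer with p ≥ 3, let β > 0, q ∈ (0,1), and E ∈ ℝ. If 1/(1−q) + β²(1−q)·p(p−1)·q^{p−2} = β·p·q^{p/2−1}·E, and β²·(q^p + p·q^{p−1}·(1−q)) = β·q^{p/2}·E, and β·q^{p/2}·E = −log(1−q), then p(1−q)·log(1−q) + p·q − (p−1)·q² = 0. -/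
/-- The system of equations (2.1)–(2.2) implies equation (1.5) characterizing `q_c`. -/
theorem stmt7 (p : ℕ) (hp : 3 ≤ p) (β : ℝ) (hβ : 0 < β)
    (q : ℝ) (hq : q ∈ Set.Ioo (0:ℝ) 1) (E : ℝ)
    (h1 : 1 / (1 - q) + β ^ 2 * (1 - q) * ((p : ℝ) * ((p : ℝ) - 1) * q ^ (p - 2))
        = β * (p : ℝ) * q ^ ((p : ℝ) / 2 - 1) * E)
    (h2 : β ^ 2 * (q ^ p + (p : ℝ) * q ^ (p - 1) * (1 - q))
        = β * q ^ ((p : ℝ) / 2) * E)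
    (h3 : β * q ^ ((p : ℝ) / 2) * E = - Real.log (1 - q)) :
    (p : ℝ) * (1 - q) * Real.log (1 - q) + (p : ℝ) * q - ((p : ℝ) - 1) * q ^ 2 = 0 := by
  obtain ⟨hq0, hq1⟩ := hq
  have h1q : (0:ℝ) < 1 - q := by linarith
  have hr : q ^ ((p:ℝ)/2 - 1) * q = q ^ ((p:ℝ)/2) := by
    rw [Real.rpow_sub hq0, Real.rpow_one]
    field_simp
  have hq2 : q ^ (p-2) * q = q ^ (p-1) := by rw [← pow_succ]; congr 1; omega
  have hq3 : q ^ (p-1) * q = q ^ p := by rw [← pow_succ]; congr 1; omega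
  have hA1 : q ^ (p-1) = q ^ (p-2) * q := hq2.symm
  have hA2 : q ^ p = q ^ (p-2) * q ^ 2 := by rw [← hq3, hA1]; ring
  rw [hA2, hA1] at h2
  have hmul : (1/(1-q) + β^2*(1-q)*((p:ℝ)*((p:ℝ)-1)*q^(p-2))) * (q*(1-q))
      = (β*(p:ℝ)*q^((p:ℝ)/2-1)*E) * (q*(1-q)) := by rw [h1]
  have hrhs : (β*(p:ℝ)*q^((p:ℝ)/2-1)*E) * (q*(1-q))
      = (p:ℝ)*(-Real.log (1-q))*(1-q) := by
    rw [← h3]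
    linear_combination ((p:ℝ)*E*β*(1-q)) * hr
  have hlhs : (1/(1-q) + β^2*(1-q)*((p:ℝ)*((p:ℝ)-1)*q^(p-2))) * (q*(1-q))
      = q + β^2*(1-q)^2*((p:ℝ)*((p:ℝ)-1))*(q^(p-2)*q) := by
    field_simp
  have eA : q + β^2*(1-q)^2*((p:ℝ)*((p:ℝ)-1))*(q^(p-2)*q)
      = (p:ℝ)*(-Real.log (1-q))*(1-q) := by rw [← hlhs, hmul, hrhs]
  have eB : β^2 * (q^(p-2) * q * (q + (p:ℝ)*(1-q))) = -Real.log (1-q) := by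
    linear_combination h2.trans h3
  have T : q*(q + (p:ℝ)*(1-q)) = (p:ℝ)*(-Real.log (1-q))*(1-q) := by
    linear_combination (q + (p:ℝ)*(1-q)) * eA - ((p:ℝ)*((p:ℝ)-1)*(1-q)^2) * eB
  linear_combination T
end

section
/- Let p be an integer with p ≥ 3, set ℓ = (p−2)/p, and let t > 0. If 0 < β₁ < β₂ and q₁, q₂ ∈ (0, ℓ] satisfy β₁·q₁^{p/2−1}·(1−q₁) = t and β₂·q₂^{p/2−1}·(1−q₂) = t, then q₂ < q₁. -/
/-- The smaller solution `q_β^−` of `β q^{p/2−1}(1−q) = t` (lying in `(0,ℓ]`)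
is strictly decreasing in `β`. -/
theorem stmt13 (p : ℕ) (hp : 3 ≤ p) (ℓ : ℝ) (hℓ : ℓ = ((p : ℝ) - 2) / (p : ℝ))
    (t : ℝ) (ht : 0 < t) (β₁ β₂ q₁ q₂ : ℝ)
    (hβ₁ : 0 < β₁) (hβ : β₁ < β₂)
    (hq₁ : q₁ ∈ Set.Ioc (0:ℝ) ℓ) (hq₂ : q₂ ∈ Set.Ioc (0:ℝ) ℓ)
    (h1 : β₁ * q₁ ^ ((p : ℝ) / 2 - 1) * (1 - q₁) = t)
    (h2 : β₂ * q₂ ^ ((p : ℝ) / 2 - 1) * (1 - q₂) = t) :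
    q₂ < q₁ := by
  have hp0 : (0:ℝ) < p := by positivity
  have hp3 : (3:ℝ) ≤ p := by exact_mod_cast hp
  set a : ℝ := (p : ℝ) / 2 - 1 with ha
  have ha0 : 0 < a := by simp only [ha]; linarith
  set f : ℝ → ℝ := fun q => q ^ a * (1 - q) with hf
  -- f is strictly monotone on Icc 0 ℓ
  have hcont : ContinuousOn f (Set.Icc 0 ℓ) :=
    ((continuous_id.rpow_const fun x => Or.inr ha0.le).mul
      (continuous_const.sub continuous_id)).continuousOn
  have hmono : StrictMonoOn f (Set.Icc 0 ℓ) := by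
    apply strictMonoOn_of_deriv_pos (convex_Icc 0 ℓ) hcont
    intro x hx
    rw [interior_Icc] at hx
    obtain ⟨hx0, hxℓ⟩ := hx
    have hd : HasDerivAt f (a * x ^ (a - 1) * (1 - x) + x ^ a * (-1)) x := by
      have h1 : HasDerivAt (fun q : ℝ => q ^ a) (a * x ^ (a - 1)) x := by
        have := Real.hasDerivAt_rpow_const (x := x) (p := a) (Or.inl hx0.ne')
        simpa using this
      have h2 : HasDerivAt (fun q : ℝ => 1 - q) (-1) x := by
        simpa using (hasDerivAt_id x).const_sub 1
      exact h1.mul h2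
    rw [hd.deriv]
    have hxa : x ^ a = x ^ (a - 1) * x := by
      rw [← Real.rpow_add_one hx0.ne']; ring_nf
    have hxpos : 0 < x ^ (a - 1) := Real.rpow_pos_of_pos hx0 _
    have hxl : (p : ℝ) * x < (p : ℝ) - 2 := by
      rw [hℓ] at hxℓ
      have := (lt_div_iff₀ hp0).mp hxℓ
      nlinarith
    have hkey : 0 < a - (a + 1) * x := by
      simp only [ha]; nlinarith
    rw [hxa]; nlinarith
  have hq₁' : q₁ ∈ Set.Icc 0 ℓ := ⟨hq₁.1.le, hq₁.2⟩
  have hq₂' : q₂ ∈ Set.Icc 0 ℓ := ⟨hq₂.1.le, hq₂.2⟩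
  have hβ₂ : 0 < β₂ := hβ₁.trans hβ
  have hf1 : f q₁ = t / β₁ := by
    field_simp [hf]; linarith [h1]
  have hf2 : f q₂ = t / β₂ := by
    field_simp [hf]; linarith [h2]
  have hlt : f q₂ < f q₁ := by
    rw [hf1, hf2]
    exact div_lt_div_of_pos_left ht hβ₁ hβ
  by_contra hcon
  push_neg at hcon
  exact absurd (hmono.monotoneOn hq₁' hq₂' hcon) (not_le.mpr hlt)
end

section
/- Let p be an integer with p ≥ 3, let β > 0, E ∈ ℝ, and q₀ ∈ (0,1), and define g(q) = β·E·q^{p/2} + (1/2)·log(1−q) + (1/2)·β²·(1 − q^p − p·q^{p−1}·(1−q)) for q ∈ [0,1). If no q ∈ (0, q₀) satisfies 1/(1−q) + β²(1−q)·p(p−1)·q^{p−2} = β·p·q^{p/2−1}·E, then g is strictly decreasing on [0, q₀]. -/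
/-!
Up to the factor `1/2`, the derivative of `g` on `(0, 1)` is the right-hand side minus the
left-hand side of the critical-point equation. Since `p ≥ 3` it extends continuously to `q = 0`
with value `-1/2`, so by the intermediate value theorem it stays negative as long as the
equation has no solution, and `g` is strictly decreasing there.
-/

open Set

noncomputable def tapFunctional (p : ℕ) (β E q : ℝ) : ℝ :=
  β * E * q ^ ((p : ℝ) / 2) + (1 / 2) * Real.log (1 - q)
    + (1 / 2) * β ^ 2 * (1 - q ^ p - (p : ℝ) * q ^ (p - 1) * (1 - q))

noncomputable def tapFunctionalDeriv (p : ℕ) (β E q : ℝ) : ℝ :=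
  (1 / 2) * (β * p * q ^ ((p : ℝ) / 2 - 1) * E - 1 / (1 - q)
    - β ^ 2 * (1 - q) * (p * (p - 1) * q ^ (p - 2)))

theorem hasDerivAt_tapFunctional (p : ℕ) (β E : ℝ) {q : ℝ} (hq0 : q ≠ 0) (hq1 : q ≠ 1) :
    HasDerivAt (tapFunctional p β E) (tapFunctionalDeriv p β E q) q := by
  have h1q : 1 - q ≠ 0 := sub_ne_zero.mpr hq1.symm
  have hsub : HasDerivAt (fun q : ℝ => 1 - q) (-1) q := by
    simpa using (hasDerivAt_id q).const_sub 1
  have hpow_pred : HasDerivAt (fun q : ℝ => q ^ (p - 1)) (((p - 1 : ℕ) : ℝ) * q ^ (p - 2)) q := by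
    simpa [Nat.sub_sub] using hasDerivAt_pow (p - 1) q
  have hderiv := (((Real.hasDerivAt_rpow_const (p := (p : ℝ) / 2) (Or.inl hq0)).const_mul (β * E)).add
    ((hsub.log h1q).const_mul (1 / 2))).add
    ((((hasDerivAt_const q 1).sub (hasDerivAt_pow p q)).sub
      ((hpow_pred.const_mul (p : ℝ)).mul hsub)).const_mul ((1 / 2) * β ^ 2))
  refine hderiv.congr_deriv ?_
  have hcast : (p : ℝ) * ((p - 1 : ℕ) : ℝ) = p * (p - 1) := by
    rcases p with _ | p <;> simp
  unfold tapFunctionalDeriv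
  field_simp
  linear_combination (-β ^ 2 * (1 - q) ^ 2 * q ^ (p - 2)) * hcast

theorem tapFunctionalDeriv_eq_zero_iff (p : ℕ) (β E q : ℝ) :
    tapFunctionalDeriv p β E q = 0 ↔
      1 / (1 - q) + β ^ 2 * (1 - q) * ((p : ℝ) * ((p : ℝ) - 1) * q ^ (p - 2))
        = β * (p : ℝ) * q ^ ((p : ℝ) / 2 - 1) * E := by
  unfold tapFunctionalDeriv
  constructor <;> intro h <;> linarith

theorem tapFunctionalDeriv_zero {p : ℕ} (hp : 3 ≤ p) (β E : ℝ) :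
    tapFunctionalDeriv p β E 0 = -1 / 2 := by
  have hrpow : (0 : ℝ) ^ ((p : ℝ) / 2 - 1) = 0 := by
    apply Real.zero_rpow
    have : (3 : ℝ) ≤ p := by exact_mod_cast hp
    linarith
  have hpow : (0 : ℝ) ^ (p - 2) = 0 := zero_pow (by omega)
  norm_num [tapFunctionalDeriv, hrpow, hpow]

theorem continuousOn_tapFunctional (p : ℕ) (β E : ℝ) :
    ContinuousOn (tapFunctional p β E) (Iio 1) := by
  have hrpow : Continuous fun q : ℝ => q ^ ((p : ℝ) / 2) :=
    continuous_iff_continuousAt.mpr fun q => Real.continuousAt_rpow_const q _ (Or.inr (by positivity))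
  have hlog : ContinuousOn (fun q : ℝ => Real.log (1 - q)) (Iio 1) :=
    (continuousOn_const.sub continuousOn_id).log fun q hq => sub_ne_zero.mpr (ne_of_gt hq)
  unfold tapFunctional
  exact ((continuousOn_const.mul hrpow.continuousOn).add (continuousOn_const.mul hlog)).add
    (by fun_prop)

theorem continuousOn_tapFunctionalDeriv {p : ℕ} (hp : 2 ≤ p) (β E : ℝ) :
    ContinuousOn (tapFunctionalDeriv p β E) (Iio 1) := by
  have hexp : (0 : ℝ) ≤ (p : ℝ) / 2 - 1 := by
    have : (2 : ℝ) ≤ p := by exact_mod_cast hp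
    linarith
  have hrpow : Continuous fun q : ℝ => q ^ ((p : ℝ) / 2 - 1) :=
    continuous_iff_continuousAt.mpr fun q => Real.continuousAt_rpow_const q _ (Or.inr hexp)
  have hinv : ContinuousOn (fun q : ℝ => 1 / (1 - q)) (Iio 1) :=
    continuousOn_const.div (continuousOn_const.sub continuousOn_id) fun q hq => sub_ne_zero.mpr (ne_of_gt hq)
  unfold tapFunctionalDeriv
  exact continuousOn_const.mul
    (((continuousOn_const.mul hrpow.continuousOn).mul continuousOn_const).sub hinv |>.sub
      (by fun_prop))

theorem neg_on_Ioo_of_continuousOn_Icc_of_ne_zero {α : Type*} [ConditionallyCompleteLinearOrder α]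
    [TopologicalSpace α] [OrderTopology α] [DenselyOrdered α] {f : α → ℝ} {a b : α}
    (hf : ContinuousOn f (Icc a b)) (ha : f a < 0) (hne : ∀ x ∈ Ioo a b, f x ≠ 0) :
    ∀ x ∈ Ioo a b, f x < 0 := by
  intro x hx
  by_contra! hfx
  obtain ⟨c, hc, hfc⟩ := intermediate_value_Ioc hx.1.le
    (hf.mono (Icc_subset_Icc_right hx.2.le)) ⟨ha, hfx⟩
  rcases hc.2.eq_or_lt with rfl | hcx
  · exact hne c hx hfc
  · exact hne c ⟨hc.1, hcx.trans hx.2⟩ hfc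

theorem stmt15_general (p : ℕ) (hp : 3 ≤ p) (β : ℝ) (E : ℝ)
    (q₀ : ℝ) (hq₀ : q₀ ∈ Set.Ioo (0:ℝ) 1)
    (g : ℝ → ℝ)
    (hg : ∀ q, g q = β * E * q ^ ((p : ℝ) / 2) + (1 / 2) * Real.log (1 - q)
        + (1 / 2) * β ^ 2 * (1 - q ^ p - (p : ℝ) * q ^ (p - 1) * (1 - q)))
    (hno : ∀ q ∈ Set.Ioo (0:ℝ) q₀,
      ¬(1 / (1 - q) + β ^ 2 * (1 - q) * ((p : ℝ) * ((p : ℝ) - 1) * q ^ (p - 2))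
          = β * (p : ℝ) * q ^ ((p : ℝ) / 2 - 1) * E)) :
    StrictAntiOn g (Set.Icc 0 q₀) := by
  obtain rfl : g = tapFunctional p β E := funext hg
  have hIcc : Icc 0 q₀ ⊆ Iio 1 := fun q hq => hq.2.trans_lt hq₀.2
  have hneg : ∀ q ∈ Ioo 0 q₀, tapFunctionalDeriv p β E q < 0 :=
    neg_on_Ioo_of_continuousOn_Icc_of_ne_zero
      ((continuousOn_tapFunctionalDeriv (by omega) β E).mono hIcc)
      (by rw [tapFunctionalDeriv_zero hp]; norm_num)
      fun q hq => (tapFunctionalDeriv_eq_zero_iff p β E q).not.mpr (hno q hq)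
  refine strictAntiOn_of_deriv_neg (convex_Icc 0 q₀)
    ((continuousOn_tapFunctional p β E).mono hIcc) fun q hq => ?_
  rw [interior_Icc] at hq
  rw [(hasDerivAt_tapFunctional p β E hq.1.ne' (hq.2.trans hq₀.2).ne).deriv]
  exact hneg q hq

/-- If no `q ∈ (0, q₀)` satisfies equation (3.1), then the TAP functional `g`
is strictly decreasing on `[0, q₀]`. -/
theorem stmt15 (p : ℕ) (hp : 3 ≤ p) (β : ℝ) (hβ : 0 < β) (E : ℝ)
    (q₀ : ℝ) (hq₀ : q₀ ∈ Set.Ioo (0:ℝ) 1)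
    (g : ℝ → ℝ)
    (hg : ∀ q, g q = β * E * q ^ ((p : ℝ) / 2) + (1 / 2) * Real.log (1 - q)
        + (1 / 2) * β ^ 2 * (1 - q ^ p - (p : ℝ) * q ^ (p - 1) * (1 - q)))
    (hno : ∀ q ∈ Set.Ioo (0:ℝ) q₀,
      ¬(1 / (1 - q) + β ^ 2 * (1 - q) * ((p : ℝ) * ((p : ℝ) - 1) * q ^ (p - 2))
          = β * (p : ℝ) * q ^ ((p : ℝ) / 2 - 1) * E)) :
    StrictAntiOn g (Set.Icc 0 q₀) :=
  stmt15_general p hp β E q₀ hq₀ g hg hno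
end
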